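/- Let θ¹ and θ² be random variables with values in 𝕋 = [−π,π) that are NOT independent, and let w : ℤ² → (0,∞) satisfy w(r₁,r₂) > 0 for all (r₁,r₂) ∈ ℤ² and Σ_{(r₁,r₂)∈ℤ²} w(r₁,r₂) < ∞. Then, for an i.i.d. sample (θ¹ᵢ, θ²ᵢ), i = 1,…,n, from (θ¹, θ²), the statistic T_{n,w} tends to +∞ almost surely as n → ∞. -/

import Mathlib

/-!
Map the angles to the torus `(ℝ / 2πℤ)²`, where they can be recovered from their images since
they live in a fundamental domain. Trigonometric polynomials separate the points of the torus,
hence separate finite measures on it; so if `D(r) = 0` for every `r ∈ ℤ²`, the joint law of the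
angles equals the product of the marginals and they are independent. Dependence thus yields some
`r₀` with `D(r₀) ≠ 0`. By the strong law of large numbers `D⁽ⁿ⁾(r₀) → D(r₀)` almost surely, and
keeping only the term `r₀` of the series gives `T_{n,w} ≥ n |D⁽ⁿ⁾(r₀)|² w(r₀) → ∞`.
-/

open MeasureTheory ProbabilityTheory Filter Real
open scoped BigOperators Topology

/-- The empirical characteristic function difference
`D^{(n)}(r₁,r₂) = φ̂(r₁,r₂) − φ̂₁(r₁)φ̂₂(r₂)` computed from the sample `(a j, b j)`, `j < n`. -/
noncomputable def ecfD (n : ℕ) (a b : ℕ → ℝ) (r : ℤ × ℤ) : ℂ :=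
  (n : ℂ)⁻¹ * ∑ j ∈ Finset.range n, Complex.exp (Complex.I * (((r.1 : ℝ) * a j + (r.2 : ℝ) * b j : ℝ) : ℂ))
    - ((n : ℂ)⁻¹ * ∑ j ∈ Finset.range n, Complex.exp (Complex.I * (((r.1 : ℝ) * a j : ℝ) : ℂ)))
        * ((n : ℂ)⁻¹ * ∑ j ∈ Finset.range n, Complex.exp (Complex.I * (((r.2 : ℝ) * b j : ℝ) : ℂ)))

namespace UnitAddTorus

open Submodule BoundedContinuousFunction

theorem measure_ext_of_integral_mFourier_eq {d : Type*} [Fintype d]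
    {P P' : Measure (UnitAddTorus d)} [IsFiniteMeasure P] [IsFiniteMeasure P']
    (h : ∀ n, ∫ x, mFourier n x ∂P = ∫ x, mFourier n x ∂P') : P = P' := by
  have integrable (f : C(UnitAddTorus d, ℂ)) (Q : Measure (UnitAddTorus d)) [IsFiniteMeasure Q] :
      Integrable f Q :=
    (mkOfCompact f).integrable Q
  have integral_eq_of_mem_span :
      ∀ f ∈ span ℂ (Set.range (mFourier (d := d))), ∫ x, f x ∂P = ∫ x, f x ∂P' := by
    intro f hf
    induction hf using Submodule.span_induction with
    | mem g hg => obtain ⟨n, rfl⟩ := hg; exact h n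
    | zero => simp
    | add f g _ _ hf hg =>
      simp only [ContinuousMap.add_apply]
      rw [integral_add (integrable f P) (integrable g P),
        integral_add (integrable f P') (integrable g P'), hf, hg]
    | smul c f _ hf => simp only [ContinuousMap.smul_apply, integral_smul, hf]
  refine ext_of_forall_mem_subalgebra_integral_eq_of_pseudoEMetric_complete_countable
    (A := (mFourierSubalgebra d).comap (toContinuousMapStarₐ ℂ)) ?_ fun g hg => ?_
  · intro x y hxy
    obtain ⟨_, ⟨f, hf, rfl⟩, hne⟩ := mFourierSubalgebra_separatesPoints hxy
    exact ⟨_, ⟨mkOfCompact f, ⟨mkOfCompact f, hf, rfl⟩, rfl⟩, hne⟩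
  · rw [StarSubalgebra.mem_comap, ← StarSubalgebra.mem_toSubalgebra,
      ← Subalgebra.mem_toSubmodule, mFourierSubalgebra_coe] at hg
    exact integral_eq_of_mem_span _ hg

end UnitAddTorus

theorem fourier_coe_div_two_pi (n : ℤ) (x : ℝ) :
    fourier n ((x / (2 * π) : ℝ) : UnitAddCircle) =
      Complex.exp (Complex.I * ((n * x : ℝ) : ℂ)) := by
  rw [fourier_coe_apply]
  congr 1
  push_cast
  field_simp

section Independence

variable {Ω ι : Type*} [Fintype ι] [MeasurableSpace Ω] {μ : Measure Ω} [IsProbabilityMeasure μ]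

theorem iIndepFun_of_integral_prod_fourier_eq {X : ι → Ω → UnitAddCircle}
    (hX : ∀ i, AEMeasurable (X i) μ)
    (h : ∀ n : ι → ℤ, ∫ ω, ∏ i, fourier (n i) (X i ω) ∂μ = ∏ i, ∫ ω, fourier (n i) (X i ω) ∂μ) :
    iIndepFun X μ := by
  rw [iIndepFun_iff_map_fun_eq_pi_map hX]
  refine UnitAddTorus.measure_ext_of_integral_mFourier_eq fun n => ?_
  rw [integral_map (aemeasurable_pi_lambda _ hX)
      (UnitAddTorus.mFourier n).continuous.aestronglyMeasurable]
  simp only [UnitAddTorus.mFourier, ContinuousMap.coe_mk]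
  rw [h n, integral_fintype_prod_eq_prod (f := fun i z => fourier (n i) z)]
  refine Finset.prod_congr rfl fun i _ => ?_
  rw [integral_map (hX i) (fourier (n i)).continuous.aestronglyMeasurable]

theorem iIndepFun_of_integral_prod_exp_eq {θ : ι → Ω → ℝ} (hθ : ∀ i, AEMeasurable (θ i) μ)
    (a : ι → ℝ) (hθa : ∀ i ω, θ i ω ∈ Set.Ico (a i) (a i + 2 * π))
    (h : ∀ n : ι → ℤ, ∫ ω, ∏ i, Complex.exp (Complex.I * ((n i * θ i ω : ℝ) : ℂ)) ∂μ
      = ∏ i, ∫ ω, Complex.exp (Complex.I * ((n i * θ i ω : ℝ) : ℂ)) ∂μ) :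
    iIndepFun θ μ := by
  set X : ι → Ω → UnitAddCircle := fun i ω => ((θ i ω / (2 * π) : ℝ) : UnitAddCircle)
  have hX : iIndepFun X μ := by
    refine iIndepFun_of_integral_prod_fourier_eq
      (fun i => AddCircle.measurable_mk'.comp_aemeasurable ((hθ i).div_const _)) fun n => ?_
    simpa only [X, fourier_coe_div_two_pi] using h n
  -- `θ i` is recovered from `X i` through the fundamental domain `[a i, a i + 2π)`
  let lift (i : ι) (z : UnitAddCircle) : ℝ :=
    2 * π * (AddCircle.equivIco 1 (a i / (2 * π)) z : ℝ)
  have hlift : ∀ i, Measurable (lift i) := fun i =>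
    (measurable_subtype_coe.comp (AddCircle.measurableEquivIco 1 _).measurable).const_mul _
  convert hX.comp lift hlift with i
  funext ω
  have hmem : θ i ω / (2 * π) ∈ Set.Ico (a i / (2 * π)) (a i / (2 * π) + 1) := by
    obtain ⟨h1, h2⟩ := hθa i ω
    constructor
    · gcongr
    · rw [div_add_one (by positivity)]; gcongr
  simp only [Function.comp_apply, lift, X, AddCircle.equivIco_coe_of_mem hmem]
  field_simp

end Independence

/-- `D(r) = φ(r₁,r₂) − φ₁(r₁)φ₂(r₂)`, the population counterpart of `ecfD`. -/
noncomputable def cfD {Ω : Type*} [MeasurableSpace Ω] (μ : Measure Ω) (X Y : Ω → ℝ)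
    (r : ℤ × ℤ) : ℂ :=
  ∫ ω, Complex.exp (Complex.I * (((r.1 : ℝ) * X ω + (r.2 : ℝ) * Y ω : ℝ) : ℂ)) ∂μ
    - (∫ ω, Complex.exp (Complex.I * (((r.1 : ℝ) * X ω : ℝ) : ℂ)) ∂μ)
      * ∫ ω, Complex.exp (Complex.I * (((r.2 : ℝ) * Y ω : ℝ) : ℂ)) ∂μ

theorem indepFun_of_cfD_eq_zero {Ω : Type*} [MeasurableSpace Ω] {μ : Measure Ω}
    [IsProbabilityMeasure μ] {X Y : Ω → ℝ} (hX : AEMeasurable X μ) (hY : AEMeasurable Y μ)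
    {a b : ℝ} (hXa : ∀ ω, X ω ∈ Set.Ico a (a + 2 * π)) (hYb : ∀ ω, Y ω ∈ Set.Ico b (b + 2 * π))
    (h : ∀ r, cfD μ X Y r = 0) : IndepFun X Y μ := by
  refine (iIndepFun_of_integral_prod_exp_eq (θ := ![X, Y]) (fun i => ?_) ![a, b]
    (fun i => ?_) fun n => ?_).indepFun zero_ne_one
  · fin_cases i <;> assumption
  · fin_cases i <;> assumption
  · have hn := sub_eq_zero.mp (h (n 0, n 1))
    simp only [Fin.prod_univ_two, Matrix.cons_val_zero, Matrix.cons_val_one]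
    rw [← hn]
    congr 1
    funext ω
    push_cast
    rw [mul_add, Complex.exp_add]

theorem strong_law_ae_comp {Ω E : Type*} [MeasurableSpace Ω] [MeasurableSpace E]
    {μ : Measure Ω} {X : ℕ → Ω → E} {Y : Ω → E} (hiid : iIndepFun X μ)
    (hident : ∀ i, IdentDistrib (X i) Y μ μ) {G : E → ℂ} (hG : Measurable G)
    (hint : Integrable (G ∘ Y) μ) :
    ∀ᵐ ω ∂μ, Tendsto (fun n : ℕ => (n : ℂ)⁻¹ * ∑ j ∈ Finset.range n, G (X j ω)) atTop
      (𝓝 (∫ ω, G (Y ω) ∂μ)) := by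
  have hident₀ (i : ℕ) : IdentDistrib (G ∘ X i) (G ∘ X 0) μ μ :=
    ((hident i).trans (hident 0).symm).comp hG
  have hslln := strong_law_ae (fun i => G ∘ X i) (((hident 0).comp hG).integrable_iff.mpr hint)
    (fun i j hij => (hiid.indepFun hij).comp hG hG) hident₀
  rw [((hident 0).comp hG).integral_eq] at hslln
  filter_upwards [hslln] with ω hω
  simpa only [Complex.real_smul, Complex.ofReal_inv, Complex.ofReal_natCast,
    Function.comp_apply] using hω

theorem ae_tendsto_ecfD {Ω : Type*} [MeasurableSpace Ω] {μ : Measure Ω} [IsFiniteMeasure μ]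
    {θ1 θ2 : Ω → ℝ} {Θ : ℕ → Ω → ℝ × ℝ} (hiid : iIndepFun Θ μ)
    (hident : ∀ i, IdentDistrib (Θ i) (fun ω => (θ1 ω, θ2 ω)) μ μ) (r : ℤ × ℤ) :
    ∀ᵐ ω ∂μ, Tendsto (fun n => ecfD n (fun i => (Θ i ω).1) (fun i => (Θ i ω).2) r) atTop
      (𝓝 (cfD μ θ1 θ2 r)) := by
  have hslln (f : ℝ × ℝ → ℝ) (hf : Continuous f) :
      ∀ᵐ ω ∂μ, Tendsto (fun n : ℕ => (n : ℂ)⁻¹ *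
          ∑ j ∈ Finset.range n, Complex.exp (Complex.I * (f (Θ j ω) : ℂ))) atTop
        (𝓝 (∫ ω, Complex.exp (Complex.I * (f (θ1 ω, θ2 ω) : ℂ)) ∂μ)) := by
    have hG : Continuous fun p => Complex.exp (Complex.I * (f p : ℂ)) := by fun_prop
    refine strong_law_ae_comp (G := fun p => Complex.exp (Complex.I * (f p : ℂ))) hiid hident
      hG.measurable (.of_bound ?_ 1 (.of_forall fun ω => ?_))
    · exact (hG.measurable.comp_aemeasurable (hident 0).aemeasurable_snd).aestronglyMeasurable
    · exact (Complex.norm_exp_I_mul_ofReal _).le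
  filter_upwards [hslln (fun p => r.1 * p.1 + r.2 * p.2) (by fun_prop),
    hslln (fun p => r.1 * p.1) (by fun_prop), hslln (fun p => r.2 * p.2) (by fun_prop)]
    with ω h h₁ h₂
  exact h.sub (h₁.mul h₂)

theorem norm_inv_mul_sum_le_one {n : ℕ} {f : ℕ → ℂ} (hf : ∀ j, ‖f j‖ ≤ 1) :
    ‖(n : ℂ)⁻¹ * ∑ j ∈ Finset.range n, f j‖ ≤ 1 := by
  calc ‖(n : ℂ)⁻¹ * ∑ j ∈ Finset.range n, f j‖ ≤ (n : ℝ)⁻¹ * ∑ j ∈ Finset.range n, ‖f j‖ := by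
        rw [norm_mul, norm_inv, Complex.norm_natCast]
        gcongr
        exact norm_sum_le _ _
    _ ≤ (n : ℝ)⁻¹ * n := by
        gcongr
        simpa using Finset.sum_le_sum fun j (_ : j ∈ Finset.range n) => hf j
    _ ≤ 1 := by
        rcases n.eq_zero_or_pos with rfl | hn
        · simp
        · rw [inv_mul_cancel₀ (by positivity)]

theorem norm_ecfD_le_two (n : ℕ) (a b : ℕ → ℝ) (r : ℤ × ℤ) : ‖ecfD n a b r‖ ≤ 2 := by
  have hexp (x : ℕ → ℝ) : ‖(n : ℂ)⁻¹ * ∑ j ∈ Finset.range n,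
      Complex.exp (Complex.I * (x j : ℂ))‖ ≤ 1 :=
    norm_inv_mul_sum_le_one fun j => (Complex.norm_exp_I_mul_ofReal _).le
  calc ‖ecfD n a b r‖ ≤ 1 + 1 * 1 := by
        refine (norm_sub_le _ _).trans (add_le_add (hexp _) ?_)
        exact (norm_mul _ _).trans_le (mul_le_mul (hexp _) (hexp _) (norm_nonneg _) zero_le_one)
    _ = 2 := by norm_num

theorem tendsto_natCast_mul_tsum_atTop {ι E : Type*} [NormedAddCommGroup E] {D : ℕ → ι → E}
    {w : ι → ℝ} {C : ℝ} (hD : ∀ n i, ‖D n i‖ ≤ C) (hw : ∀ i, 0 ≤ w i) (hsum : Summable w)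
    {i₀ : ι} (hi₀ : 0 < w i₀) {c : E} (hc : c ≠ 0)
    (hlim : Tendsto (fun n => D n i₀) atTop (𝓝 c)) :
    Tendsto (fun n : ℕ => (n : ℝ) * ∑' i, ‖D n i‖ ^ 2 * w i) atTop atTop := by
  have hL : 0 < ‖c‖ ^ 2 * w i₀ := by have := norm_pos_iff.mpr hc; positivity
  have hnonneg (n : ℕ) (i : ι) : 0 ≤ ‖D n i‖ ^ 2 * w i := mul_nonneg (by positivity) (hw i)
  have hsummable (n : ℕ) : Summable fun i => ‖D n i‖ ^ 2 * w i :=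
    (hsum.mul_left (C ^ 2)).of_nonneg_of_le (hnonneg n) fun i =>
      mul_le_mul_of_nonneg_right (pow_le_pow_left₀ (norm_nonneg _) (hD n i) 2) (hw i)
  have hev : ∀ᶠ n in atTop, ‖c‖ ^ 2 * w i₀ / 2 ≤ ‖D n i₀‖ ^ 2 * w i₀ :=
    ((hlim.norm.pow 2).mul_const (w i₀)).eventually (eventually_ge_nhds (half_lt_self hL))
  refine tendsto_atTop_mono' atTop ?_ (tendsto_natCast_atTop_atTop.atTop_mul_const (half_pos hL))
  filter_upwards [hev] with n hn
  gcongr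
  exact hn.trans ((hsummable n).le_tsum i₀ fun i _ => hnonneg n i)

theorem Tnw_tendsto_atTop_of_not_indep_general
    {Ω : Type*} [MeasurableSpace Ω] (μ : Measure Ω) [IsProbabilityMeasure μ]
    (θ1 θ2 : Ω → ℝ)
    (hθ1T : ∀ ω, θ1 ω ∈ Set.Ico (-Real.pi) Real.pi)
    (hθ2T : ∀ ω, θ2 ω ∈ Set.Ico (-Real.pi) Real.pi)
    (hnotindep : ¬ IndepFun θ1 θ2 μ)
    (Θ : ℕ → Ω → ℝ × ℝ)
    (hiid : iIndepFun Θ μ)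
    (hident : ∀ i, IdentDistrib (Θ i) (fun ω => (θ1 ω, θ2 ω)) μ μ)
    (w : ℤ × ℤ → ℝ) (hw : ∀ r, 0 < w r) (hsum : Summable w) :
    ∀ᵐ ω ∂μ, Tendsto
      (fun n : ℕ =>
        (n : ℝ) * ∑' r : ℤ × ℤ,
          ‖ecfD n (fun i => (Θ i ω).1) (fun i => (Θ i ω).2) r‖ ^ 2 * w r)
      atTop atTop := by
  have hθ : AEMeasurable (fun ω => (θ1 ω, θ2 ω)) μ := (hident 0).aemeasurable_snd
  have hfund : -π + 2 * π = π := by ring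
  obtain ⟨r₀, hr₀⟩ : ∃ r, cfD μ θ1 θ2 r ≠ 0 := by
    by_contra! h
    exact hnotindep <| indepFun_of_cfD_eq_zero hθ.fst hθ.snd (a := -π) (b := -π)
      (by rwa [hfund]) (by rwa [hfund]) h
  filter_upwards [ae_tendsto_ecfD hiid hident r₀] with ω hω
  exact tendsto_natCast_mul_tsum_atTop (fun n r => norm_ecfD_le_two n _ _ r) (fun r => (hw r).le)
    hsum (hw r₀) hr₀ hω

/-- Proposition 4 (second part): if the circular random variables `θ¹` and `θ²` are not
independent and the weight `w` is strictly positive and summable, then `T_{n,w} → +∞`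
almost surely. -/
theorem Tnw_tendsto_atTop_of_not_indep
    {Ω : Type*} [MeasurableSpace Ω] (μ : Measure Ω) [IsProbabilityMeasure μ]
    (θ1 θ2 : Ω → ℝ) (hθ1 : Measurable θ1) (hθ2 : Measurable θ2)
    (hθ1T : ∀ ω, θ1 ω ∈ Set.Ico (-Real.pi) Real.pi)
    (hθ2T : ∀ ω, θ2 ω ∈ Set.Ico (-Real.pi) Real.pi)
    (hnotindep : ¬ IndepFun θ1 θ2 μ)
    (Θ : ℕ → Ω → ℝ × ℝ) (hΘmeas : ∀ i, Measurable (Θ i))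
    (hiid : iIndepFun Θ μ)
    (hident : ∀ i, IdentDistrib (Θ i) (fun ω => (θ1 ω, θ2 ω)) μ μ)
    (w : ℤ × ℤ → ℝ) (hw : ∀ r, 0 < w r) (hsum : Summable w) :
    ∀ᵐ ω ∂μ, Tendsto
      (fun n : ℕ =>
        (n : ℝ) * ∑' r : ℤ × ℤ,
          ‖ecfD n (fun i => (Θ i ω).1) (fun i => (Θ i ω).2) r‖ ^ 2 * w r)
      atTop atTop :=
  Tnw_tendsto_atTop_of_not_indep_general μ θ1 θ2 hθ1T hθ2T hnotindep Θ hiid hident w hw hsum
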